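/- Let A : ℝᵐ → ℝⁿ be an injective linear map (so AᵀA is invertible), α > 0, and let μ, ν be probability measures on ℝⁿ with finite second moments. Write A† = (AᵀA)⁻¹Aᵀ and B_α = (AᵀA + αI)⁻¹Aᵀ. Then W₂(A†_# μ, (B_α)_# ν) ≤ ‖B_α‖ · W₂(μ, ν) + ‖B_α − A†‖ · (∫ ‖y‖² dμ(y))^{1/2}, where ‖·‖ on maps denotes the operator norm and W₂ is the 2-Wasserstein distance. (Here A†_#μ is the true unregularized reconstruction from the true data μ, and (B_α)_#ν is the α-regularized reconstruction from the perturbed data ν.) -/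

import Mathlib

/-!
Push a coupling `π` of `μ` and `ν` forward by `(x, y) ↦ (A† x, B_α y)`: this couples the two
reconstructions, and its cost is the `L²(π)` norm of `A† x - B_α y = B_α (x - y) - (B_α - A†) x`.
Minkowski bounds it by `‖B_α‖ ‖x - y‖_{L²(π)} + ‖B_α - A†‖ ‖x‖_{L²(μ)}`; take the infimum over `π`.
-/

open MeasureTheory Real ContinuousLinearMap
open scoped ENNReal

/-- `cpl` is a coupling of `μ` and `ν`: a measure on the product whose marginals
are `μ` and `ν`. -/
def IsCoupling {X Y : Type*} [MeasurableSpace X] [MeasurableSpace Y]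
    (μ : Measure X) (ν : Measure Y) (cpl : Measure (X × Y)) : Prop :=
  cpl.map Prod.fst = μ ∧ cpl.map Prod.snd = ν

/-- The 2-Wasserstein distance, expressed as the square root of the infimal squared
transport cost over couplings. -/
noncomputable def W2 {E : Type*} [MeasurableSpace E] [NormedAddCommGroup E]
    (μ ν : Measure E) : ℝ≥0∞ :=
  (⨅ (cpl : Measure (E × E)) (_ : IsCoupling μ ν cpl),
    ∫⁻ z, ENNReal.ofReal (‖z.1 - z.2‖ ^ 2) ∂cpl) ^ (1 / 2 : ℝ)

lemma eLpNorm_two_eq_lintegral_ofReal_sq {α E : Type*} [MeasurableSpace α] [NormedAddCommGroup E]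
    (f : α → E) (μ : Measure α) :
    eLpNorm f 2 μ = (∫⁻ x, ENNReal.ofReal (‖f x‖ ^ 2) ∂μ) ^ (1 / 2 : ℝ) := by
  simp [eLpNorm_eq_lintegral_rpow_enorm_toReal, ← ofReal_norm, ENNReal.ofReal_pow]

section Coupling

variable {X Y X' Y' : Type*} [MeasurableSpace X] [MeasurableSpace Y] [MeasurableSpace X']
  [MeasurableSpace Y'] {μ : Measure X} {ν : Measure Y} {cpl : Measure (X × Y)}

lemma isCoupling_prod (μ : Measure X) (ν : Measure Y) [IsProbabilityMeasure μ]
    [IsProbabilityMeasure ν] : IsCoupling μ ν (μ.prod ν) :=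
  ⟨Measure.fst_prod, Measure.snd_prod⟩

lemma IsCoupling.map (h : IsCoupling μ ν cpl) {f : X → X'} {g : Y → Y'} (hf : Measurable f)
    (hg : Measurable g) : IsCoupling (μ.map f) (ν.map g) (cpl.map (Prod.map f g)) := by
  constructor
  · rw [Measure.map_map measurable_fst (hf.prodMap hg), ← h.1, Measure.map_map hf measurable_fst]
    rfl
  · rw [Measure.map_map measurable_snd (hf.prodMap hg), ← h.2, Measure.map_map hg measurable_snd]
    rfl

lemma IsCoupling.eLpNorm_fst {E : Type*} [NormedAddCommGroup E] {f : X → E}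
    (h : IsCoupling μ ν cpl) (hf : AEStronglyMeasurable f μ) (p : ℝ≥0∞) :
    eLpNorm (fun z => f z.1) p cpl = eLpNorm f p μ := by
  rw [← h.1] at hf ⊢
  exact (eLpNorm_map_measure hf measurable_fst.aemeasurable).symm

end Coupling

section W2

variable {E : Type*} [NormedAddCommGroup E] [MeasurableSpace E] {μ ν : Measure E}

lemma W2_eq_iInf_eLpNorm (μ ν : Measure E) :
    W2 μ ν = ⨅ (cpl : Measure (E × E)) (_ : IsCoupling μ ν cpl),
      eLpNorm (fun z => z.1 - z.2) 2 cpl := by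
  let e := ENNReal.orderIsoRpow (1 / 2) (by norm_num)
  simp only [W2, eLpNorm_two_eq_lintegral_ofReal_sq]
  change e _ = ⨅ (cpl) (_ : IsCoupling μ ν cpl), e _
  simp only [e.map_iInf]

lemma W2_le_eLpNorm {cpl : Measure (E × E)} (h : IsCoupling μ ν cpl) :
    W2 μ ν ≤ eLpNorm (fun z => z.1 - z.2) 2 cpl :=
  W2_eq_iInf_eLpNorm μ ν ▸ iInf₂_le cpl h

lemma le_mul_W2_add {x c d : ℝ≥0∞} (hc : c ≠ ∞) (hne : ∃ cpl, IsCoupling μ ν cpl)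
    (h : ∀ cpl, IsCoupling μ ν cpl → x ≤ c * eLpNorm (fun z : E × E => z.1 - z.2) 2 cpl + d) :
    x ≤ c * W2 μ ν + d := by
  obtain ⟨cpl₀, h₀⟩ := hne
  have : Nonempty {cpl // IsCoupling μ ν cpl} := ⟨⟨cpl₀, h₀⟩⟩
  rw [W2_eq_iInf_eLpNorm, iInf_subtype', ENNReal.mul_iInf (by simp [hc]), ENNReal.iInf_add]
  exact le_iInf fun cpl => h cpl.1 cpl.2

end W2

section LinearMaps

variable {𝕜 E F : Type*} [NontriviallyNormedField 𝕜] [NormedAddCommGroup E] [NormedSpace 𝕜 E]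
  [NormedAddCommGroup F] [NormedSpace 𝕜 F]

lemma ContinuousLinearMap.eLpNorm_comp_le {α : Type*} [MeasurableSpace α] (L : E →L[𝕜] F)
    (f : α → E) (p : ℝ≥0∞) (μ : Measure α) :
    eLpNorm (fun x => L (f x)) p μ ≤ ‖L‖ₑ * eLpNorm f p μ :=
  eLpNorm_le_mul_eLpNorm_of_ae_le_mul' (c := ‖L‖₊)
    (Filter.Eventually.of_forall fun x => L.le_opENorm (f x)) p

lemma eLpNorm_apply_fst_sub_apply_snd_le [MeasurableSpace E] [OpensMeasurableSpace (E × E)]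
    [SecondCountableTopology F] (T S : E →L[𝕜] F) (ρ : Measure (E × E)) {p : ℝ≥0∞} (hp : 1 ≤ p) :
    eLpNorm (fun z => T z.1 - S z.2) p ρ ≤
      ‖S‖ₑ * eLpNorm (fun z => z.1 - z.2) p ρ + ‖S - T‖ₑ * eLpNorm (fun z => z.1) p ρ := by
  have hsplit : (fun z : E × E => T z.1 - S z.2) = fun z => S (z.1 - z.2) - (S - T) z.1 := by
    ext z; simp
  rw [hsplit]
  calc eLpNorm (fun z : E × E => S (z.1 - z.2) - (S - T) z.1) p ρ
      ≤ eLpNorm (fun z : E × E => S (z.1 - z.2)) p ρ + eLpNorm (fun z => (S - T) z.1) p ρ :=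
        eLpNorm_sub_le (by fun_prop : Continuous _).aestronglyMeasurable
          (by fun_prop : Continuous _).aestronglyMeasurable hp
    _ ≤ _ := add_le_add (S.eLpNorm_comp_le _ p ρ) ((S - T).eLpNorm_comp_le _ p ρ)

end LinearMaps

theorem W2_map_le {𝕜 E F : Type*} [NontriviallyNormedField 𝕜] [NormedAddCommGroup E]
    [NormedSpace 𝕜 E] [MeasurableSpace E] [BorelSpace E] [SecondCountableTopology E]
    [NormedAddCommGroup F] [NormedSpace 𝕜 F] [MeasurableSpace F] [BorelSpace F]
    [SecondCountableTopology F] (T S : E →L[𝕜] F) (μ ν : Measure E) [IsProbabilityMeasure μ]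
    [IsProbabilityMeasure ν] :
    W2 (μ.map T) (ν.map S) ≤ ‖S‖ₑ * W2 μ ν + ‖S - T‖ₑ * eLpNorm id 2 μ := by
  refine le_mul_W2_add enorm_ne_top ⟨_, isCoupling_prod μ ν⟩ fun cpl h => ?_
  have hTS : Measurable (Prod.map T S) := T.measurable.prodMap S.measurable
  calc W2 (μ.map T) (ν.map S)
      ≤ eLpNorm (fun z => z.1 - z.2) 2 (cpl.map (Prod.map T S)) :=
        W2_le_eLpNorm (h.map T.measurable S.measurable)
    _ = eLpNorm (fun z => T z.1 - S z.2) 2 cpl :=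
        eLpNorm_map_measure (by fun_prop : Continuous _).aestronglyMeasurable hTS.aemeasurable
    _ ≤ ‖S‖ₑ * eLpNorm (fun z => z.1 - z.2) 2 cpl + ‖S - T‖ₑ * eLpNorm (fun z => z.1) 2 cpl :=
        eLpNorm_apply_fst_sub_apply_snd_le T S cpl one_le_two
    _ = ‖S‖ₑ * eLpNorm (fun z => z.1 - z.2) 2 cpl + ‖S - T‖ₑ * eLpNorm id 2 μ := by
        rw [← h.eLpNorm_fst aestronglyMeasurable_id]
        rfl

theorem stmt_13_general {m n : ℕ}
    (μ ν : Measure (EuclideanSpace ℝ (Fin n)))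
    [IsProbabilityMeasure μ] [IsProbabilityMeasure ν]
    (Adag Bα : EuclideanSpace ℝ (Fin n) →L[ℝ] EuclideanSpace ℝ (Fin m)) :
    W2 (μ.map Adag) (ν.map Bα) ≤
      ENNReal.ofReal ‖Bα‖ * W2 μ ν +
      ENNReal.ofReal ‖Bα - Adag‖ * (∫⁻ y, ENNReal.ofReal (‖y‖ ^ 2) ∂μ) ^ (1 / 2 : ℝ) := by
  simpa only [ofReal_norm, eLpNorm_two_eq_lintegral_ofReal_sq, id] using W2_map_le Adag Bα μ ν

/-- Let `A : ℝᵐ → ℝⁿ` be an injective linear map, `α > 0`, and `μ, ν`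
probability measures on `ℝⁿ` with finite second moments. With `A† = (AᵀA)⁻¹Aᵀ` and
`B_α = (AᵀA + αI)⁻¹Aᵀ` (inverses via `Ring.inverse`; they exist by injectivity and
positivity), `W₂(A†_#μ, (B_α)_#ν) ≤ ‖B_α‖·W₂(μ,ν) + ‖B_α - A†‖·(∫‖y‖² dμ)^{1/2}`. -/
theorem stmt_13 {m n : ℕ}
    (A : EuclideanSpace ℝ (Fin m) →L[ℝ] EuclideanSpace ℝ (Fin n))
    (hA : Function.Injective A) (α : ℝ) (hα : 0 < α)
    (μ ν : Measure (EuclideanSpace ℝ (Fin n)))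
    [IsProbabilityMeasure μ] [IsProbabilityMeasure ν]
    (hμ2 : ∫⁻ y, ENNReal.ofReal (‖y‖ ^ 2) ∂μ < ⊤)
    (hν2 : ∫⁻ y, ENNReal.ofReal (‖y‖ ^ 2) ∂ν < ⊤)
    (Adag Bα : EuclideanSpace ℝ (Fin n) →L[ℝ] EuclideanSpace ℝ (Fin m))
    (hAdag : Adag = Ring.inverse (adjoint A ∘L A) ∘L adjoint A)
    (hBα : Bα = Ring.inverse (adjoint A ∘L A + α • (1 : EuclideanSpace ℝ (Fin m) →L[ℝ]
      EuclideanSpace ℝ (Fin m))) ∘L adjoint A) :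
    W2 (μ.map Adag) (ν.map Bα) ≤
      ENNReal.ofReal ‖Bα‖ * W2 μ ν +
      ENNReal.ofReal ‖Bα - Adag‖ * (∫⁻ y, ENNReal.ofReal (‖y‖ ^ 2) ∂μ) ^ (1 / 2 : ℝ) :=
  stmt_13_general μ ν Adag Bα
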